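/- Let H be a graph with minimum degree at least 2 such that for every vertex x of degree exactly 2 in H, the two neighbors of x are adjacent in H. Then for every graph G and every integer k ≥ 0, the following are equivalent: (i) there exists F ⊆ E(G) with |F| ≤ k such that G − F is H-free; (ii) there exists a graph obtained from G by at most k edge subdivisions that is H-free. -/

import Mathlib

open SimpleGraph

/-- The number of neighbors (degree) of a vertex, via `Set.ncard`. -/
noncomputable def ndeg {V : Type*} (G : SimpleGraph V) (v : V) : ℕ := (G.neighborSet v).ncard

/-- The graph obtained from `G` by subdividing the edge `uv`. -/
def subdivide {V : Type*} (G : SimpleGraph V) (u v : V) : SimpleGraph (Option V) :=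
  SimpleGraph.fromRel (fun x y =>
    (∃ a b : V, x = some a ∧ y = some b ∧ G.Adj a b ∧ ¬(a = u ∧ b = v) ∧ ¬(a = v ∧ b = u)) ∨
    (x = none ∧ (y = some u ∨ y = some v)))

/-- `G` is `H`-free if it contains no induced subgraph isomorphic to `H`. -/
def HFree {α β : Type*} (H : SimpleGraph α) (G : SimpleGraph β) : Prop :=
  IsEmpty (H ↪g G)

/-- Bundled graphs. -/
abbrev GraphB : Type 1 := Σ V : Type, SimpleGraph V

/-- One edge-subdivision step between (bundled) graphs, up to isomorphism. -/
def SubdivStep : GraphB → GraphB → Prop := fun p q =>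
  ∃ u v : p.1, p.2.Adj u v ∧ Nonempty (q.2 ≃g subdivide p.2 u v)

/-- `SubdivSteps n p q`: `q` is obtained from `p` by exactly `n` edge subdivisions. -/
def SubdivSteps : ℕ → GraphB → GraphB → Prop
  | 0 => fun p q => p = q
  | n + 1 => fun p r => ∃ q : GraphB, SubdivStep p q ∧ SubdivSteps n q r

/-!
Subdividing an edge `uv` of `G` only adds a vertex whose two neighbours `u` and `v` are
nonadjacent. No vertex of an induced copy of `H` can sit there: it would have degree exactly `2`
with nonadjacent neighbours. Hence an induced copy of `H` in the subdivision of `uv` is already an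
induced copy in `G - uv`, and subdividing the edges of a deletion set one at a time keeps the graph
`H`-free. Conversely, `G - uv` is an induced subgraph of the subdivision of `uv`, and a set of
deleted edges pulls back along an induced embedding without growing, so a graph obtained by `n`
subdivisions contains `G - F` as an induced subgraph for a set `F` of at most `n` edges of `G`.
-/

section Subdivide

variable {V : Type*} (G : SimpleGraph V) (u v : V)

@[simp]
lemma subdivide_adj_some_some {a b : V} :
    (subdivide G u v).Adj (some a) (some b) ↔ (G.deleteEdges {s(u, v)}).Adj a b := by
  simp only [subdivide, fromRel_adj, deleteEdges_adj, Set.mem_singleton_iff, Sym2.eq_iff]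
  constructor
  · rintro ⟨-, (⟨a', b', ⟨⟩, ⟨⟩, h, h₁, h₂⟩ | ⟨⟨⟩, -⟩) | (⟨a', b', ⟨⟩, ⟨⟩, h, h₁, h₂⟩ | ⟨⟨⟩, -⟩)⟩
    · exact ⟨h, by tauto⟩
    · exact ⟨h.symm, by tauto⟩
  · rintro ⟨h, h'⟩
    exact ⟨by simpa using h.ne, Or.inl (Or.inl ⟨a, b, rfl, rfl, h, by tauto⟩)⟩

@[simp]
lemma subdivide_adj_none_some {a : V} :
    (subdivide G u v).Adj none (some a) ↔ a = u ∨ a = v := by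
  simp [subdivide, fromRel_adj]

lemma neighborSet_subdivide_none :
    (subdivide G u v).neighborSet none = {some u, some v} := by
  ext (_ | a) <;> simp

def deleteEdgeEmbeddingSubdivide : G.deleteEdges {s(u, v)} ↪g subdivide G u v where
  toFun := some
  inj' := Option.some_injective V
  map_rel_iff' := subdivide_adj_some_some G u v

lemma subdivide_deleteEdges (S : Set (Sym2 V)) :
    (subdivide G u v).deleteEdges (Sym2.map some '' S) = subdivide (G.deleteEdges S) u v := by
  have hinj : Function.Injective (Sym2.map (some : V → Option V)) :=
    Sym2.map.injective (Option.some_injective V)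
  have hnone (x : Option V) : s(none, x) ∉ Sym2.map some '' S := by
    rintro ⟨e, -, he⟩
    induction e using Sym2.ind
    simp at he
  ext (_ | a) (_ | b)
  · simp
  · simp [hnone]
  · rw [adj_comm, adj_comm (subdivide _ u v)]
    simp [hnone]
  · have hsome : s(some a, some b) ∈ Sym2.map some '' S ↔ s(a, b) ∈ S :=
      hinj.mem_set_image (a := s(a, b))
    simp only [deleteEdges_adj, subdivide_adj_some_some, hsome]
    tauto

lemma subdivStep_subdivide {V : Type} {G : SimpleGraph V} {u v : V} (huv : G.Adj u v) :
    SubdivStep ⟨V, G⟩ ⟨Option V, subdivide G u v⟩ :=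
  ⟨u, v, huv, ⟨Iso.refl⟩⟩

end Subdivide

namespace SimpleGraph.Embedding

variable {V W : Type*} {A : SimpleGraph V} {B : SimpleGraph W}

lemma exists_deleteEdges_embedding (f : A ↪g B) (S : Finset (Sym2 W))
    (hS : ↑S ⊆ B.edgeSet) :
    ∃ T : Finset (Sym2 V), ↑T ⊆ A.edgeSet ∧ T.card ≤ S.card ∧
      Nonempty (A.deleteEdges ↑T ↪g B.deleteEdges ↑S) := by
  have hinj : Function.Injective (Sym2.map f) := Sym2.map.injective f.injective
  refine ⟨S.preimage (Sym2.map f) hinj.injOn, fun e he => ?_,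
    Finset.card_le_card_of_injOn _ (fun e he => Finset.mem_preimage.mp he) hinj.injOn,
    ⟨⟨f.toEmbedding, fun {a b} => ?_⟩⟩⟩
  · exact f.map_mem_edgeSet_iff.mp (hS (Finset.mem_preimage.mp he))
  · simp [deleteEdges_adj]

end SimpleGraph.Embedding

section HFree

variable {α : Type*} {H : SimpleGraph α}

lemma HFree.of_embedding {V W : Type*} {G : SimpleGraph V} {G' : SimpleGraph W} (f : G ↪g G')
    (h : HFree H G') : HFree H G :=
  ⟨fun g => h.false (f.comp g)⟩

section Subdivide

variable {V : Type*} {G : SimpleGraph V} {u v : V}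

/-- An induced copy of `H` in a subdivision avoids the new vertex: its image would have degree `2`
with nonadjacent neighbours `u` and `v`. -/
lemma SimpleGraph.Embedding.apply_ne_none_of_subdivide (f : H ↪g subdivide G u v) {x : α}
    (hx : 2 ≤ ndeg H x)
    (hx2 : ∀ y z, ndeg H x = 2 → H.Adj x y → H.Adj x z → y ≠ z → H.Adj y z) :
    f x ≠ none := by
  intro hfx
  have hsub : f '' H.neighborSet x ⊆ {some u, some v} := by
    rw [← neighborSet_subdivide_none, ← hfx]
    rintro _ ⟨y, hy, rfl⟩
    exact f.map_rel_iff.mpr hy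
  have hcard : ndeg H x = (f '' H.neighborSet x).ncard :=
    (Set.ncard_image_of_injective _ f.injective).symm
  have himage : f '' H.neighborSet x = {some u, some v} :=
    Set.eq_of_subset_of_ncard_le hsub
      (((Set.ncard_insert_le _ _).trans (by simp)).trans (hcard ▸ hx))
  have huv : some u ≠ some v := by
    intro h
    rw [himage, h, Set.pair_eq_singleton, Set.ncard_singleton] at hcard
    omega
  obtain ⟨y, hy, hfy⟩ : some u ∈ f '' H.neighborSet x := himage ▸ Set.mem_insert _ _
  obtain ⟨z, hz, hfz⟩ : some v ∈ f '' H.neighborSet x := himage ▸ Set.mem_insert_of_mem _ rfl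
  have hyz : y ≠ z := by
    rintro rfl
    exact huv (hfy.symm.trans hfz)
  have hadj := f.map_rel_iff.mpr (hx2 y z (hcard.trans (himage ▸ Set.ncard_pair huv)) hy hz hyz)
  rw [hfy, hfz] at hadj
  simp at hadj

theorem HFree.subdivide_of_deleteEdges (hmin : ∀ x, 2 ≤ ndeg H x)
    (hK2 : ∀ x y z, ndeg H x = 2 → H.Adj x y → H.Adj x z → y ≠ z → H.Adj y z)
    (h : HFree H (G.deleteEdges {s(u, v)})) : HFree H (subdivide G u v) := by
  refine ⟨fun f => ?_⟩
  have hsome (x : α) : ∃ a, f x = some a :=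
    Option.ne_none_iff_exists'.mp (f.apply_ne_none_of_subdivide (hmin x) (hK2 x))
  choose g hg using hsome
  refine h.false ⟨⟨g, fun a b hab => f.injective (by rw [hg, hg, hab])⟩, fun {a b} => ?_⟩
  change (G.deleteEdges {s(u, v)}).Adj (g a) (g b) ↔ H.Adj a b
  rw [← subdivide_adj_some_some, ← hg, ← hg, f.map_rel_iff]

end Subdivide

theorem HFree.exists_subdivSteps (hmin : ∀ x, 2 ≤ ndeg H x)
    (hK2 : ∀ x y z, ndeg H x = 2 → H.Adj x y → H.Adj x z → y ≠ z → H.Adj y z)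
    {V : Type} (G : SimpleGraph V) (F : Finset (Sym2 V)) (hF : ↑F ⊆ G.edgeSet)
    (h : HFree H (G.deleteEdges ↑F)) :
    ∃ q : GraphB, SubdivSteps F.card ⟨V, G⟩ q ∧ HFree H q.2 := by
  classical
  obtain ⟨n, hn⟩ : ∃ n, F.card = n := ⟨_, rfl⟩
  rw [hn]
  induction n generalizing V G F with
  | zero =>
    rw [Finset.card_eq_zero.mp hn, Finset.coe_empty, deleteEdges_empty] at h
    exact ⟨⟨V, G⟩, rfl, h⟩
  | succ n ih =>
    obtain ⟨e, he⟩ := Finset.card_pos.mp (by omega : 0 < F.card)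
    induction e using Sym2.ind with | _ u v =>
    let F' := (F.erase s(u, v)).image (Sym2.map some)
    have hF' : ↑F' ⊆ (subdivide G u v).edgeSet := by
      simp only [F', Finset.coe_image, Set.image_subset_iff]
      intro e he'
      refine (deleteEdgeEmbeddingSubdivide G u v).map_mem_edgeSet_iff.mpr ?_
      rw [edgeSet_deleteEdges]
      exact ⟨hF (Finset.mem_of_mem_erase he'), Finset.ne_of_mem_erase he'⟩
    have hcard : F'.card = n := by
      rw [Finset.card_image_of_injective _ (Sym2.map.injective (Option.some_injective V)),
        Finset.card_erase_of_mem he, hn, Nat.add_sub_cancel]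
    have hfree : HFree H ((subdivide G u v).deleteEdges ↑F') := by
      rw [Finset.coe_image, subdivide_deleteEdges]
      refine HFree.subdivide_of_deleteEdges hmin hK2 ?_
      rwa [deleteEdges_deleteEdges, Finset.coe_erase, Set.sdiff_union_of_subset
        (Set.singleton_subset_iff.mpr he)]
    obtain ⟨q, hq, hqfree⟩ := ih (subdivide G u v) F' hF' hfree hcard
    exact ⟨q, ⟨_, subdivStep_subdivide (hF he), hq⟩, hqfree⟩

end HFree

lemma SubdivStep.exists_deleteEdges_embedding {p q : GraphB} (h : SubdivStep p q)
    (S : Finset (Sym2 q.1)) (hS : ↑S ⊆ q.2.edgeSet) :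
    ∃ T : Finset (Sym2 p.1), ↑T ⊆ p.2.edgeSet ∧ T.card ≤ S.card + 1 ∧
      Nonempty (p.2.deleteEdges ↑T ↪g q.2.deleteEdges ↑S) := by
  classical
  obtain ⟨u, v, huv, ⟨ι⟩⟩ := h
  obtain ⟨T, hT, hTS, ⟨f⟩⟩ :=
    (ι.symm.toEmbedding.comp (deleteEdgeEmbeddingSubdivide p.2 u v)).exists_deleteEdges_embedding
      S hS
  refine ⟨insert s(u, v) T, ?_, (Finset.card_insert_le _ _).trans (by omega), ⟨?_⟩⟩
  · rw [edgeSet_deleteEdges] at hT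
    rw [Finset.coe_insert, Set.insert_subset_iff]
    exact ⟨huv, hT.trans Set.sdiff_subset⟩
  · rwa [Finset.coe_insert, Set.insert_eq, ← deleteEdges_deleteEdges]

theorem SubdivSteps.exists_deleteEdges_embedding {n : ℕ} {p q : GraphB}
    (h : SubdivSteps n p q) (S : Finset (Sym2 q.1)) (hS : ↑S ⊆ q.2.edgeSet) :
    ∃ T : Finset (Sym2 p.1), ↑T ⊆ p.2.edgeSet ∧ T.card ≤ S.card + n ∧
      Nonempty (p.2.deleteEdges ↑T ↪g q.2.deleteEdges ↑S) := by
  induction n generalizing p with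
  | zero =>
    subst h
    exact ⟨S, hS, le_rfl, ⟨Embedding.refl⟩⟩
  | succ n ih =>
    obtain ⟨p', hstep, hsteps⟩ := h
    obtain ⟨T', hT', hT'S, ⟨f'⟩⟩ := ih hsteps
    obtain ⟨T, hT, hTT', ⟨f⟩⟩ := hstep.exists_deleteEdges_embedding T' hT'
    exact ⟨T, hT, by omega, ⟨f'.comp f⟩⟩

theorem HFree_edge_deletion_iff_subdivision_general
    {α V : Type}
    (H : SimpleGraph α)
    (hmin : ∀ x : α, 2 ≤ ndeg H x)
    (hK2 : ∀ x y z : α, ndeg H x = 2 → H.Adj x y → H.Adj x z → y ≠ z → H.Adj y z)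
    (G : SimpleGraph V) (k : ℕ) :
    (∃ F : Finset (Sym2 V), ↑F ⊆ G.edgeSet ∧ F.card ≤ k ∧ HFree H (G.deleteEdges ↑F)) ↔
    (∃ n ≤ k, ∃ q : GraphB, SubdivSteps n ⟨V, G⟩ q ∧ HFree H q.2) := by
  constructor
  · rintro ⟨F, hF, hFk, hfree⟩
    obtain ⟨q, hq, hqfree⟩ := hfree.exists_subdivSteps hmin hK2 G F hF
    exact ⟨F.card, hFk, q, hq, hqfree⟩
  · rintro ⟨n, hnk, q, hq, hqfree⟩
    obtain ⟨F, hF, hFn, ⟨f⟩⟩ := hq.exists_deleteEdges_embedding ∅ (by simp)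
    rw [Finset.coe_empty, deleteEdges_empty] at f
    exact ⟨F, hF, (by simpa using hFn : F.card ≤ n).trans hnk, hqfree.of_embedding f⟩

/-- Let `H` be a graph with minimum degree at least 2 in which the two neighbors of every
degree-2 vertex are adjacent.  Then for every graph `G` and every `k ≥ 0`: there is a set
`F` of at most `k` edges of `G` with `G − F` `H`-free, if and only if some graph obtained
from `G` by at most `k` edge subdivisions is `H`-free. -/
theorem HFree_edge_deletion_iff_subdivision
    {α V : Type} [Fintype α] [Fintype V]
    (H : SimpleGraph α)
    (hmin : ∀ x : α, 2 ≤ ndeg H x)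
    (hK2 : ∀ x y z : α, ndeg H x = 2 → H.Adj x y → H.Adj x z → y ≠ z → H.Adj y z)
    (G : SimpleGraph V) (k : ℕ) :
    (∃ F : Finset (Sym2 V), ↑F ⊆ G.edgeSet ∧ F.card ≤ k ∧ HFree H (G.deleteEdges ↑F)) ↔
    (∃ n ≤ k, ∃ q : GraphB, SubdivSteps n ⟨V, G⟩ q ∧ HFree H q.2) :=
  HFree_edge_deletion_iff_subdivision_general H hmin hK2 G k
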